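/- Let L₁, L₂, V be Lagrangians of M with V ∩ L₁ = 0 and V ∩ L₂ = 0 (so that M = L₂ ⊕ V), and let b : L₂ → V be the unique linear map such that L₁ = {u + b(u) : u ∈ L₂}. Then the composite F_{L₂,L₁} ∘ F_{V,L₂} ∘ F_{L₁,V} : S_{L₁,ψ} → S_{L₁,ψ} equals multiplication by the scalar θ(L₁,L₂,V) = q^d · ∑_{u∈L₂} ψ((1/2)·ω(b(u), u)). -/

import Mathlib

open scoped BigOperators

variable {k : Type*} [Field k] [Fintype k] {M : Type*} [AddCommGroup M] [Module k M]

/-- Multiplication of the Heisenberg group `H(M) = M × k` attached to the symplectic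
form `ω`: `(m,a)·(m′,a′) = (m+m′, a+a′+(1/2)ω(m,m′))`. -/
def hmul (ω : M →ₗ[k] M →ₗ[k] k) (x y : M × k) : M × k :=
  (x.1 + y.1, x.2 + y.2 + (2 : k)⁻¹ * ω x.1 y.1)

/-- `L` is a Lagrangian of the `2d`-dimensional symplectic space `(M, ω)`:
a `d`-dimensional subspace on which `ω` vanishes. -/
def IsLagrangian (ω : M →ₗ[k] M →ₗ[k] k) (d : ℕ) (L : Submodule k M) : Prop :=
  Module.finrank k L = d ∧ ∀ l ∈ L, ∀ l' ∈ L, ω l l' = 0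

/-- `f` belongs to `S_{L,ψ}`: `f((l,a)·h) = ψ(a)·f(h)` for `l ∈ L`, `a ∈ k`, `h ∈ H(M)`. -/
def InS (ω : M →ₗ[k] M →ₗ[k] k) (ψ : k → ℂ) (L : Submodule k M)
    (f : M × k → ℂ) : Prop :=
  ∀ l ∈ L, ∀ (a : k) (h : M × k), f (hmul ω (l, a) h) = ψ a * f h

/-- The intertwiner `F_{·,L₂}`: `(F_{L₁,L₂}f)(h) = ∑_{z ∈ L₂} f((z,0)·h)`. -/
noncomputable def interF (ω : M →ₗ[k] M →ₗ[k] k) (L₂ : Submodule k M)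
    (f : M × k → ℂ) : M × k → ℂ :=
  fun h => ∑ᶠ z ∈ (L₂ : Set M), f (hmul ω (z, 0) h)

lemma hmul_assoc (ω : M →ₗ[k] M →ₗ[k] k) (x y z : M × k) :
    hmul ω (hmul ω x y) z = hmul ω x (hmul ω y z) := by
  simp only [hmul, Prod.mk.injEq, map_add, LinearMap.add_apply]
  constructor
  · exact add_assoc _ _ _
  · ring

lemma aux_char_sum {k : Type*} [Field k] (ψ : k → ℂ)
    (hψadd : ∀ a b : k, ψ (a + b) = ψ a * ψ b) (hψnt : ∃ a : k, ψ a ≠ 1)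
    {A : Type*} [AddCommGroup A] [Module k A] [Fintype A]
    (φ : A →ₗ[k] k) (hφ : φ ≠ 0) : ∑ u : A, ψ (φ u) = 0 := by
  obtain ⟨a, ha⟩ := hψnt
  obtain ⟨u1, hu1⟩ : ∃ u, φ u ≠ 0 := by
    by_contra hc
    push_neg at hc
    exact hφ (LinearMap.ext fun u => by simp [hc u])
  have hφu0 : φ ((a / φ u1) • u1) = a := by
    rw [map_smul, smul_eq_mul, div_mul_cancel₀ _ hu1]
  have key : ∑ u : A, ψ (φ u) = ψ a * ∑ u : A, ψ (φ u) := by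
    calc ∑ u : A, ψ (φ u)
        = ∑ u : A, ψ (φ (u + (a / φ u1) • u1)) :=
          (Fintype.sum_equiv (Equiv.addRight ((a / φ u1) • u1))
            (fun u => ψ (φ (u + (a / φ u1) • u1))) (fun u => ψ (φ u))
            (fun u => rfl)).symm
      _ = ∑ u : A, ψ a * ψ (φ u) := by
          refine Finset.sum_congr rfl fun u _ => ?_
          rw [map_add, hφu0, hψadd, mul_comm]
      _ = ψ a * ∑ u : A, ψ (φ u) := by rw [Finset.mul_sum]
  have h0 : (ψ a - 1) * ∑ u : A, ψ (φ u) = 0 := by linear_combination -key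
  rcases mul_eq_zero.mp h0 with h | h
  · exact absurd (sub_eq_zero.mp h) ha
  · exact h

/-- Let `L₁, L₂, V` be Lagrangians with `V ∩ L₁ = 0`, `V ∩ L₂ = 0`, and let
`b : L₂ → V` be the linear map with `L₁ = {u + b(u) : u ∈ L₂}`. Then
`F_{L₂,L₁} ∘ F_{V,L₂} ∘ F_{L₁,V} : S_{L₁,ψ} → S_{L₁,ψ}` is multiplication by
`θ(L₁,L₂,V) = q^d · ∑_{u ∈ L₂} ψ((1/2)·ω(b(u),u))`. -/
theorem theta_scalar_gauss_sum {k : Type*} [Field k] [Fintype k]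
    {M : Type*} [AddCommGroup M] [Module k M] [Fintype M]
    (hodd : Odd (Fintype.card k))
    (ψ : k → ℂ) (hψadd : ∀ a b : k, ψ (a + b) = ψ a * ψ b) (hψnt : ∃ a : k, ψ a ≠ 1)
    (d : ℕ) (ω : M →ₗ[k] M →ₗ[k] k)
    (hdim : Module.finrank k M = 2 * d)
    (halt : ∀ m : M, ω m m = 0)
    (hnd : ∀ m : M, (∀ m' : M, ω m m' = 0) → m = 0)
    (L₁ L₂ V : Submodule k M)
    (hL₁ : IsLagrangian ω d L₁) (hL₂ : IsLagrangian ω d L₂) (hV : IsLagrangian ω d V)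
    (hVL₁ : V ⊓ L₁ = ⊥) (hVL₂ : V ⊓ L₂ = ⊥)
    (b : ↥L₂ →ₗ[k] ↥V)
    (hb : (L₁ : Set M) = {x : M | ∃ u : ↥L₂, x = (u : M) + (b u : M)}) :
    ∀ f : M × k → ℂ, InS ω ψ L₁ f →
      interF ω L₁ (interF ω L₂ (interF ω V f))
        = ((Fintype.card k : ℂ) ^ d
            * ∑ᶠ u : ↥L₂, ψ ((2 : k)⁻¹ * ω (b u : M) (u : M))) • f := by
  intro f hf
  classical
  have h00 : ∀ x : M × k, hmul ω ((0 : M), (0 : k)) x = x := by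
    intro x; simp [hmul]
  have hF : ∀ (L : Submodule k M) (g : M × k → ℂ) (x : M × k),
      interF ω L g x = ∑ z : ↥L, g (hmul ω ((z : M), 0) x) := by
    intro L g x
    have h1 : interF ω L g x = ∑ᶠ z ∈ (L : Set M), g (hmul ω (z, 0) x) := rfl
    rw [h1, ← finsum_set_coe_eq_finsum_mem, finsum_eq_sum_of_fintype]
    exact Fintype.sum_equiv (Equiv.subtypeEquivRight (fun z => by simp)) _ _ (fun z => rfl)
  by_cases hψ0 : ψ 0 = 1
  swap
  · -- degenerate case : f = 0
    have hf0 : ∀ x, f x = 0 := by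
      intro x
      have h1 := hf 0 L₁.zero_mem 0 x
      rw [h00] at h1
      by_contra hx
      refine hψ0 (mul_right_cancel₀ hx ?_)
      rw [one_mul, ← h1]
    funext x
    simp only [hF, hf0, Pi.smul_apply, smul_eq_mul, mul_zero, Finset.sum_const_zero]
  -- main case
  have hchar : ringChar k ≠ 2 := by
    intro hc
    have h1 := FiniteField.even_card_of_char_two hc
    rw [Nat.odd_iff] at hodd
    omega
  have h2ne : (2 : k) ≠ 0 := Ring.two_ne_zero hchar
  have h2sum : (2 : k)⁻¹ + (2 : k)⁻¹ = 1 := by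
    field_simp
    norm_num
  have hskew : ∀ x y : M, ω x y = - ω y x := by
    intro x y
    have h := halt (x + y)
    simp only [map_add, LinearMap.add_apply] at h
    rw [halt x, halt y] at h
    linear_combination h
  have hgraph : ∀ u : ↥L₂, ((u : M) + (b u : M)) ∈ L₁ := by
    intro u
    rw [← SetLike.mem_coe, hb]
    exact ⟨u, rfl⟩
  have hdisj : ∀ x : M, x ∈ V → x ∈ L₂ → x = 0 := by
    intro x hx hx'
    have h1 : x ∈ V ⊓ L₂ := ⟨hx, hx'⟩
    rw [hVL₂] at h1
    simpa using h1
  haveI : Module.Finite k M := Module.Finite.of_finite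
  have hsup : L₂ ⊔ V = ⊤ := by
    apply Submodule.eq_top_of_disjoint
    · rw [hL₂.1, hV.1, hdim]; omega
    · rw [disjoint_iff, inf_comm]; exact hVL₂
  have hpair : ∀ v : ↥V, (∀ u : ↥L₂, ω (v : M) (u : M) = 0) → (v : M) = 0 := by
    intro v hv
    apply hnd
    intro m
    have hm : m ∈ L₂ ⊔ V := by rw [hsup]; trivial
    obtain ⟨a, ha, c, hc, rfl⟩ := Submodule.mem_sup.mp hm
    rw [map_add, hv ⟨a, ha⟩, hV.2 _ v.2 _ hc, add_zero]
  have hcard : Fintype.card ↥L₂ = Fintype.card k ^ d := by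
    rw [Module.card_eq_pow_finrank (K := k), hL₂.1]
  -- the bijection L₂ ≃ L₁, u ↦ u + b u
  have hbij : Function.Bijective
      (fun u : ↥L₂ => (⟨(u : M) + (b u : M), hgraph u⟩ : ↥L₁)) := by
    constructor
    · intro u u' huu
      have h1 : (u : M) + (b u : M) = (u' : M) + (b u' : M) := congrArg Subtype.val huu
      have h2 : (u : M) - (u' : M) = (b u' : M) - (b u : M) := by
        rw [sub_eq_sub_iff_add_eq_add]
        exact h1.trans (add_comm _ _)
      have h3 : ((u - u' : ↥L₂) : M) = 0 := by
        apply hdisj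
        · have : ((u - u' : ↥L₂) : M) = ((b u' - b u : ↥V) : M) := by
            push_cast
            exact h2
          rw [this]; exact (b u' - b u).2
        · exact (u - u').2
      have h4 : u - u' = 0 := by exact_mod_cast Subtype.ext h3
      exact sub_eq_zero.mp h4
    · intro w
      have hw : (w : M) ∈ (L₁ : Set M) := w.2
      rw [hb] at hw
      obtain ⟨u, hu⟩ := hw
      exact ⟨u, Subtype.ext hu.symm⟩
  set e : ↥L₂ ≃ ↥L₁ := Equiv.ofBijective _ hbij with he_def
  have he : ∀ u : ↥L₂, ((e u : ↥L₁) : M) = (u : M) + (b u : M) := fun u => rfl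
  -- the inner character sum
  have hinner : ∀ v : ↥V, (∑ u : ↥L₂, ψ (ω (v : M) (u : M)))
      = if v = 0 then ((Fintype.card k : ℂ)) ^ d else 0 := by
    intro v
    by_cases hv : v = 0
    · subst hv
      rw [if_pos rfl]
      have : ∀ u : ↥L₂, ψ (ω ((0 : ↥V) : M) (u : M)) = 1 := by
        intro u
        simp only [ZeroMemClass.coe_zero, map_zero, LinearMap.zero_apply]
        exact hψ0
      rw [Finset.sum_congr rfl (fun u _ => this u), Finset.sum_const, Finset.card_univ,
        hcard, nsmul_eq_mul]
      push_cast
      ring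
    · rw [if_neg hv]
      have hφ : ((ω (v : M)).comp L₂.subtype) ≠ 0 := by
        intro hc
        apply hv
        have h1 : (v : M) = 0 := by
          apply hpair
          intro u
          have := congrArg (fun φ => φ u) hc
          simpa using this
        exact_mod_cast Subtype.ext h1
      exact aux_char_sum ψ hψadd hψnt _ hφ
  funext x
  -- the key pointwise identity
  have key : ∀ (z u' : ↥L₂) (v' : ↥V),
      f (hmul ω (((v' : M) + (b z : M)), 0) (hmul ω ((z : M), 0)
        (hmul ω (((u' - z : ↥L₂) : M) + ((b (u' - z) : ↥V) : M), 0) x)))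
      = ψ (ω (v' : M) (u' : M)) * (ψ ((2 : k)⁻¹ * ω (b z : M) (z : M))
          * f (hmul ω ((v' : M), 0) x)) := by
    intro z u' v'
    have hrel : ω (z : M) (b u' : M) + ω (b z : M) (u' : M) = 0 := by
      have h := hL₁.2 _ (hgraph z) _ (hgraph u')
      simp only [map_add, LinearMap.add_apply] at h
      rw [hL₂.2 _ z.2 _ u'.2, hV.2 _ (b z).2 _ (b u').2] at h
      linear_combination h
    have hstep : hmul ω (((v' : M) + (b z : M)), 0) (hmul ω ((z : M), 0)
        (hmul ω (((u' - z : ↥L₂) : M) + ((b (u' - z) : ↥V) : M), 0) x))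
        = hmul ω (((u' : M) + (b u' : M)),
            ω (v' : M) (u' : M) + (2 : k)⁻¹ * ω (b z : M) (z : M))
          (hmul ω ((v' : M), 0) x) := by
      rw [← hmul_assoc, ← hmul_assoc]
      conv_rhs => rw [← hmul_assoc]
      congr 1
      have hc1 : ((u' - z : ↥L₂) : M) = (u' : M) - (z : M) := by push_cast; ring
      have hc2 : ((b (u' - z) : ↥V) : M) = (b u' : M) - (b z : M) := by
        rw [map_sub]; push_cast; ring
      rw [hc1, hc2]
      have hz1 : ω (v' : M) (b z : M) = 0 := hV.2 _ v'.2 _ (b z).2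
      have hz2 : ω (v' : M) (b u' : M) = 0 := hV.2 _ v'.2 _ (b u').2
      have hz3 : ω (b z : M) (b u' : M) = 0 := hV.2 _ (b z).2 _ (b u').2
      have hz4 : ω (z : M) (u' : M) = 0 := hL₂.2 _ z.2 _ u'.2
      have hz5 : ω (b u' : M) (v' : M) = 0 := hV.2 _ (b u').2 _ v'.2
      have hz6 : ω (u' : M) (v' : M) = - ω (v' : M) (u' : M) := hskew _ _
      have hz7 : ω (b z : M) (z : M) = - ω (z : M) (b z : M) := hskew _ _
      have hz8 : ω (b z : M) (v' : M) = 0 := hV.2 _ (b z).2 _ v'.2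
      have hz9 : ω (z : M) (z : M) = 0 := halt _
      have hz10 : ω (b z : M) (b z : M) = 0 := halt _
      simp only [hmul, Prod.mk.injEq, map_add, map_sub, LinearMap.add_apply,
        LinearMap.sub_apply]
      constructor
      · abel
      · rw [hz1, hz2, hz3, hz4, hz5, hz6, hz7, hz9, hz10]
        linear_combination ((2 : k)⁻¹) * hrel + (ω (v' : M) (u' : M)) * h2sum
    rw [hstep, hf _ (hgraph u') _ _, hψadd, mul_assoc]
  -- evaluate the triple sum for each fixed z
  have hz : ∀ z : ↥L₂,
      (∑ u : ↥L₂, ∑ v : ↥V, f (hmul ω ((v : M), 0) (hmul ω ((z : M), 0)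
          (hmul ω ((u : M) + (b u : M), 0) x))))
      = (Fintype.card k : ℂ) ^ d * (ψ ((2 : k)⁻¹ * ω (b z : M) (z : M)) * f x) := by
    intro z
    calc
      (∑ u : ↥L₂, ∑ v : ↥V, f (hmul ω ((v : M), 0) (hmul ω ((z : M), 0)
          (hmul ω ((u : M) + (b u : M), 0) x))))
          = ∑ u : ↥L₂, ∑ v : ↥V, f (hmul ω (((v + b z : ↥V) : M), 0) (hmul ω ((z : M), 0)
              (hmul ω (((u - z : ↥L₂) : M) + ((b (u - z) : ↥V) : M), 0) x))) := by
            refine ((Equiv.sum_comp (Equiv.subRight z) (fun u : ↥L₂ => ∑ v : ↥V,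
              f (hmul ω ((v : M), 0) (hmul ω ((z : M), 0)
                (hmul ω ((u : M) + (b u : M), 0) x))))).symm).trans ?_
            refine Finset.sum_congr rfl fun u _ => ?_
            exact (Equiv.sum_comp (Equiv.addRight (b z)) (fun v : ↥V =>
              f (hmul ω ((v : M), 0) (hmul ω ((z : M), 0)
                (hmul ω (((u - z : ↥L₂) : M) + ((b (u - z) : ↥V) : M), 0) x))))).symm
      _ = ∑ u : ↥L₂, ∑ v : ↥V, ψ (ω (v : M) (u : M))
              * (ψ ((2 : k)⁻¹ * ω (b z : M) (z : M)) * f (hmul ω ((v : M), 0) x)) := by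
            refine Finset.sum_congr rfl fun u _ => Finset.sum_congr rfl fun v _ => ?_
            rw [show ((v + b z : ↥V) : M) = (v : M) + (b z : M) by push_cast; ring]
            exact key z u v
      _ = ∑ v : ↥V, (∑ u : ↥L₂, ψ (ω (v : M) (u : M)))
              * (ψ ((2 : k)⁻¹ * ω (b z : M) (z : M)) * f (hmul ω ((v : M), 0) x)) := by
            rw [Finset.sum_comm]
            exact Finset.sum_congr rfl fun v _ => (Finset.sum_mul _ _ _).symm
      _ = (Fintype.card k : ℂ) ^ d * (ψ ((2 : k)⁻¹ * ω (b z : M) (z : M)) * f x) := by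
            rw [Finset.sum_eq_single (0 : ↥V)]
            · rw [hinner, if_pos rfl]
              simp only [ZeroMemClass.coe_zero, h00]
            · intro v _ hv
              rw [hinner, if_neg hv, zero_mul]
            · intro habs
              exact absurd (Finset.mem_univ _) habs
  -- assemble
  simp only [hF]
  rw [← Equiv.sum_comp e (fun w : ↥L₁ => ∑ z : ↥L₂, ∑ v : ↥V,
    f (hmul ω ((v : M), 0) (hmul ω ((z : M), 0) (hmul ω ((w : M), 0) x))))]
  simp only [he]
  rw [Finset.sum_comm]
  rw [Finset.sum_congr rfl (fun z _ => hz z)]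
  rw [Pi.smul_apply, smul_eq_mul, finsum_eq_sum_of_fintype]
  rw [mul_assoc, Finset.sum_mul, Finset.mul_sum]
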